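/- arXiv:1212.1862 — 4 statements merged into one kernel-verified Lean document; each statement's English description precedes it below -/
import Mathlib

section
/- Let A ∈ ℂ^{2n×2n}, C ∈ ℂ^{2m×2n} satisfy A + A^♭ + C^♭C = 0 where A^♭ = J_n A^† J_n and C^♭ = J_n C^† J_m, with J_k = diag(I_k,-I_k). Assume A is Hurwitz (all eigenvalues have negative real part). Define the transfer function Ξ_G(s) = S - C (sI - A)^{-1} C^♭ S for a unitary doubled-up S with S^♭ S = I. Then for all ω ∈ ℝ, Ξ_G(iω)^♭ Ξ_G(iω) = Ξ_G(iω) Ξ_G(iω)^♭ = I_{2m}, where Ξ_G(iω)^♭ = J_m Ξ_G(iω)^† J_m. -/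
open Matrix

/-- J_n = diag(I_n, -I_n). -/
noncomputable def Jmat (n : ℕ) : Matrix (Fin n ⊕ Fin n) (Fin n ⊕ Fin n) ℂ :=
  Matrix.fromBlocks 1 0 0 (-1)

/-- The ♭ operation X^♭ = J_k X^† J_j for X ∈ ℂ^{2j×2k}. -/
noncomputable def flat {j k : ℕ} (X : Matrix (Fin j ⊕ Fin j) (Fin k ⊕ Fin k) ℂ) :
    Matrix (Fin k ⊕ Fin k) (Fin j ⊕ Fin j) ℂ :=
  Jmat k * Xᴴ * Jmat j

lemma Jmat_sq (k : ℕ) : Jmat k * Jmat k = 1 := by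
  simp [Jmat, Matrix.fromBlocks_multiply, ← Matrix.fromBlocks_one]

lemma Jmat_conjT (k : ℕ) : (Jmat k)ᴴ = Jmat k := by
  simp [Jmat, Matrix.fromBlocks_conjTranspose]

lemma Jmat_inv (k : ℕ) : (Jmat k)⁻¹ = Jmat k :=
  Matrix.inv_eq_right_inv (Jmat_sq k)

lemma flat_mul {j k l : ℕ} (X : Matrix (Fin j ⊕ Fin j) (Fin k ⊕ Fin k) ℂ)
    (Y : Matrix (Fin k ⊕ Fin k) (Fin l ⊕ Fin l) ℂ) :
    flat (X * Y) = flat Y * flat X := by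
  symm
  calc flat Y * flat X
      = Jmat l * (Yᴴ * ((Jmat k * Jmat k) * (Xᴴ * Jmat j))) := by
        simp only [flat, Matrix.mul_assoc]
    _ = Jmat l * (Yᴴ * (Xᴴ * Jmat j)) := by rw [Jmat_sq, Matrix.one_mul]
    _ = flat (X * Y) := by
        simp only [flat, Matrix.conjTranspose_mul, Matrix.mul_assoc]

lemma flat_one {k : ℕ} : flat (1 : Matrix (Fin k ⊕ Fin k) (Fin k ⊕ Fin k) ℂ) = 1 := by
  simp only [flat, Matrix.conjTranspose_one, Matrix.mul_one, Jmat_sq]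

lemma flat_flat {j k : ℕ} (X : Matrix (Fin j ⊕ Fin j) (Fin k ⊕ Fin k) ℂ) :
    flat (flat X) = X := by
  simp only [flat, Matrix.conjTranspose_mul, Matrix.conjTranspose_conjTranspose, Jmat_conjT]
  calc Jmat j * (Jmat j * (X * Jmat k)) * Jmat k
      = (Jmat j * Jmat j) * (X * (Jmat k * Jmat k)) := by simp only [Matrix.mul_assoc]
    _ = X := by rw [Jmat_sq, Jmat_sq, Matrix.one_mul, Matrix.mul_one]

lemma flat_sub {j k : ℕ} (X Y : Matrix (Fin j ⊕ Fin j) (Fin k ⊕ Fin k) ℂ) :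
    flat (X - Y) = flat X - flat Y := by
  simp only [flat, Matrix.conjTranspose_sub, Matrix.sub_mul, Matrix.mul_sub]

lemma flat_smul_one {k : ℕ} (a : ℂ) :
    flat (a • (1 : Matrix (Fin k ⊕ Fin k) (Fin k ⊕ Fin k) ℂ)) = (star a) • 1 := by
  simp only [flat, Matrix.conjTranspose_smul, Matrix.conjTranspose_one,
    Matrix.mul_smul, Matrix.smul_mul, Matrix.mul_one, Jmat_sq]

lemma flat_inv {k : ℕ} (M : Matrix (Fin k ⊕ Fin k) (Fin k ⊕ Fin k) ℂ) :
    flat (M⁻¹) = (flat M)⁻¹ := by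
  simp only [flat, Matrix.conjTranspose_nonsing_inv, Matrix.mul_inv_rev, Jmat_inv,
    Matrix.mul_assoc]

lemma cross_key {n m : ℕ}
    (C : Matrix (Fin m ⊕ Fin m) (Fin n ⊕ Fin n) ℂ)
    (Q : Matrix (Fin n ⊕ Fin n) (Fin m ⊕ Fin m) ℂ)
    (M N : Matrix (Fin n ⊕ Fin n) (Fin n ⊕ Fin n) ℂ)
    (hMdet : IsUnit M.det) (hNdet : IsUnit N.det)
    (hsum : M + N = Q * C) :
    (1 - C * N⁻¹ * Q) * (1 - C * M⁻¹ * Q) = 1 := by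
  have hcross : C * N⁻¹ * Q * (C * M⁻¹ * Q) = C * N⁻¹ * Q + C * M⁻¹ * Q := by
    have h1 : C * N⁻¹ * Q * (C * M⁻¹ * Q) = C * (N⁻¹ * (Q * C) * M⁻¹) * Q := by
      simp only [Matrix.mul_assoc]
    have h2 : N⁻¹ * (M + N) * M⁻¹ = M⁻¹ + N⁻¹ := by
      rw [Matrix.mul_add, Matrix.add_mul, Matrix.nonsing_inv_mul _ hNdet,
        Matrix.mul_assoc, Matrix.mul_nonsing_inv _ hMdet, Matrix.one_mul, Matrix.mul_one]
      abel
    rw [h1, ← hsum, h2, Matrix.mul_add, Matrix.add_mul]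
    abel
  have expand : (1 - C * N⁻¹ * Q) * (1 - C * M⁻¹ * Q)
      = 1 - C * N⁻¹ * Q - C * M⁻¹ * Q + C * N⁻¹ * Q * (C * M⁻¹ * Q) := by
    generalize C * N⁻¹ * Q = X
    generalize C * M⁻¹ * Q = Y
    noncomm_ring
  rw [expand, hcross]
  abel

/-- Flat-unitarity of the transfer function of a physically realizable, asymptotically stable
quantum linear system: Ξ_G(iω)^♭ Ξ_G(iω) = Ξ_G(iω) Ξ_G(iω)^♭ = I for all real ω. -/
theorem transfer_function_flat_unitary {n m : ℕ}
    (A : Matrix (Fin n ⊕ Fin n) (Fin n ⊕ Fin n) ℂ)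
    (C : Matrix (Fin m ⊕ Fin m) (Fin n ⊕ Fin n) ℂ)
    (S : Matrix (Fin m ⊕ Fin m) (Fin m ⊕ Fin m) ℂ)
    (hPR : A + flat A + flat C * C = 0)
    (hHurwitz : ∀ μ ∈ spectrum ℂ A, μ.re < 0)
    (hS : flat S * S = 1 ∧ S * flat S = 1)
    (Ξ : ℝ → Matrix (Fin m ⊕ Fin m) (Fin m ⊕ Fin m) ℂ)
    (hΞ : ∀ ω : ℝ, Ξ ω = S - C * ((Complex.I * (ω : ℂ)) • (1 : Matrix (Fin n ⊕ Fin n) (Fin n ⊕ Fin n) ℂ) - A)⁻¹ * (flat C * S)) :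
    ∀ ω : ℝ, flat (Ξ ω) * Ξ ω = 1 ∧ Ξ ω * flat (Ξ ω) = 1 := by
  intro ω
  obtain ⟨M, hMdef⟩ : ∃ X, X = (Complex.I * (ω : ℂ)) •
      (1 : Matrix (Fin n ⊕ Fin n) (Fin n ⊕ Fin n) ℂ) - A := ⟨_, rfl⟩
  obtain ⟨N, hNdef⟩ : ∃ X, X = flat M := ⟨_, rfl⟩
  -- invertibility of M
  have hnotmem : Complex.I * (ω : ℂ) ∉ spectrum ℂ A := by
    intro h
    have := hHurwitz _ h
    simp [Complex.mul_re, Complex.I_re, Complex.I_im] at this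
  have hMunit : IsUnit M := by
    have := spectrum.notMem_iff.mp hnotmem
    rwa [Algebra.algebraMap_eq_smul_one, ← hMdef] at this
  have hMdet : IsUnit M.det := (Matrix.isUnit_iff_isUnit_det M).mp hMunit
  have hNdet : IsUnit N.det := by
    have hJ : IsUnit (Jmat n) :=
      @isUnit_of_invertible _ _ _ ⟨Jmat n, Jmat_sq n, Jmat_sq n⟩
    have hMH : IsUnit Mᴴ := by
      rw [Matrix.isUnit_iff_isUnit_det, Matrix.det_conjTranspose]
      exact hMdet.star
    rw [← Matrix.isUnit_iff_isUnit_det, hNdef]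
    exact (hJ.mul hMH).mul hJ
  -- key sum identity
  have hsum : M + N = flat C * C := by
    have hflatM : N = (-(Complex.I * (ω : ℂ))) • 1 - flat A := by
      rw [hNdef, hMdef, flat_sub, flat_smul_one]
      congr 2
      simp [Complex.ext_iff]
    have h2 : flat C * C = -(A + flat A) := by
      rw [eq_neg_iff_add_eq_zero, add_comm]; exact hPR
    rw [hflatM, hMdef, h2]
    module
  have hKK1 : (1 - C * N⁻¹ * flat C) * (1 - C * M⁻¹ * flat C) = 1 :=
    cross_key C (flat C) M N hMdet hNdet hsum
  have hKK2 : (1 - C * M⁻¹ * flat C) * (1 - C * N⁻¹ * flat C) = 1 := by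
    refine cross_key C (flat C) N M hNdet hMdet ?_
    rw [add_comm]; exact hsum
  -- Ξ ω = K * S
  have hΞK : Ξ ω = (1 - C * M⁻¹ * flat C) * S := by
    rw [hΞ ω, ← hMdef, Matrix.sub_mul, Matrix.one_mul]
    simp only [Matrix.mul_assoc]
  have hflatΞ : flat (Ξ ω) = flat S * (1 - C * N⁻¹ * flat C) := by
    rw [hΞK, flat_mul, flat_sub, flat_one, flat_mul, flat_mul, flat_flat, flat_inv, ← hNdef]
    simp only [Matrix.mul_assoc]
  constructor
  · rw [hflatΞ, hΞK]
    calc flat S * (1 - C * N⁻¹ * flat C) * ((1 - C * M⁻¹ * flat C) * S)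
        = flat S * (((1 - C * N⁻¹ * flat C) * (1 - C * M⁻¹ * flat C)) * S) := by
          simp only [Matrix.mul_assoc]
      _ = 1 := by rw [hKK1, Matrix.one_mul, hS.1]
  · rw [hflatΞ, hΞK]
    calc (1 - C * M⁻¹ * flat C) * S * (flat S * (1 - C * N⁻¹ * flat C))
        = (1 - C * M⁻¹ * flat C) * ((S * flat S) * (1 - C * N⁻¹ * flat C)) := by
          simp only [Matrix.mul_assoc]
      _ = 1 := by rw [hS.2, Matrix.one_mul, hKK2]
end

section
/- Let A ∈ ℂ^{2n×2n} be Hurwitz, and let g_G(t) = δ(t)S - C e^{At} C^♭ S for t ≥ 0 and 0 for t < 0 (impulse response of the quantum linear system with flat-unitary property). Then the function g_{G^{-1}}(t) := S^♭δ(t) - S^♭ C e^{-A^♭ t} C^♭ for t ≤ 0 and 0 for t > 0 satisfies the convolution identity ∫ g_G(t-r) g_{G^{-1}}(r - t') dr = δ(t - t') I_{2m}; equivalently, in the Laplace domain, the two-sided Laplace transform of g_{G^{-1}} equals Ξ_G(s)^{-1} on the imaginary axis. -/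
open Matrix MeasureTheory

/-!
With `N = -iω - A^♭`, the Laplace integral is `S^♭ - S^♭ C (∫_{-∞}^0 e^{tN} dt) C^♭`.
Since `A^♭ = J A^† J` with `J` unitary, the spectrum of `A^♭` is the conjugate of that of `A`,
so `N` has its spectrum in the open right half-plane. Decomposing into generalized eigenvectors,
every entry of `e^{tN}` is a combination of `t^j e^{tμ}` with `Re μ > 0`; hence it is integrable
on `(-∞, 0]` and vanishes at `-∞`, and the fundamental theorem of calculus applied to `N⁻¹ e^{tN}`
gives `∫_{-∞}^0 e^{tN} dt = N⁻¹`. Finally the positive-real identity `C^♭ C = (iω - A) + N`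
makes `S^♭ - S^♭ C N⁻¹ C^♭` a right inverse of `Ξ(iω) = S - C (iω - A)⁻¹ C^♭ S`.
-/

open NormedSpace Set Filter Topology
open scoped Nat

lemma tendsto_pow_mul_cexp_mul_atBot {ν : ℂ} (hν : 0 < ν.re) (j : ℕ) :
    Tendsto (fun t : ℝ => (t : ℂ) ^ j * Complex.exp (t * ν)) atBot (𝓝 0) := by
  rw [tendsto_zero_iff_norm_tendsto_zero, ← tendsto_comp_neg_atTop_iff]
  refine (tendsto_rpow_mul_exp_neg_mul_atTop_nhds_zero j ν.re hν).congr' ?_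
  filter_upwards [eventually_ge_atTop 0] with x hx
  simp [Complex.norm_exp, abs_of_nonneg hx, mul_comm]

lemma integrableOn_Iic_pow_mul_cexp_mul {ν : ℂ} (hν : 0 < ν.re) (j : ℕ) (a : ℝ) :
    IntegrableOn (fun t : ℝ => (t : ℂ) ^ j * Complex.exp (t * ν)) (Iic a) := by
  have hν' : 0 < (ν / 2).re := by simpa using hν
  have hO : (fun t : ℝ => (t : ℂ) ^ j * Complex.exp (t * ν)) =O[atBot]
      fun t : ℝ => Complex.exp (ν / 2 * t) := by
    have := (tendsto_pow_mul_cexp_mul_atBot hν' j).isBigO_one ℂ |>.mul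
      (Asymptotics.isBigO_refl (fun t : ℝ => Complex.exp (ν / 2 * t)) atBot)
    refine (this.congr_left fun t => ?_).congr_right fun t => one_mul _
    rw [mul_assoc, ← Complex.exp_add]
    ring_nf
  have hcont : Continuous fun t : ℝ => (t : ℂ) ^ j * Complex.exp (t * ν) := by fun_prop
  exact (hcont.continuousOn.locallyIntegrableOn measurableSet_Iic).integrableOn_of_isBigO_atBot hO
    ⟨Iic 0, Iic_mem_atBot 0, integrableOn_exp_mul_complex_Iic hν' 0⟩

def decayingIntegrableAtBot : Submodule ℂ (ℝ → ℂ) where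
  carrier := {f | IntegrableOn f (Iic 0) ∧ Tendsto f atBot (𝓝 0)}
  add_mem' hf hg := ⟨hf.1.add hg.1, by simpa [Pi.add_def] using hf.2.add hg.2⟩
  zero_mem' := ⟨integrableOn_zero, tendsto_const_nhds⟩
  smul_mem' c f hf := by
    refine ⟨hf.1.smul c, ?_⟩
    simpa [Pi.smul_def] using hf.2.const_smul c

lemma pow_mul_cexp_mul_mem_decayingIntegrableAtBot {ν : ℂ} (hν : 0 < ν.re) (j : ℕ) :
    (fun t : ℝ => (t : ℂ) ^ j * Complex.exp (t * ν)) ∈ decayingIntegrableAtBot :=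
  ⟨integrableOn_Iic_pow_mul_cexp_mul hν j 0, tendsto_pow_mul_cexp_mul_atBot hν j⟩

namespace Matrix

section Exp

variable {ι : Type*} [Fintype ι] [DecidableEq ι]

lemma exp_smul_eq_cexp_smul_exp_smul_sub_smul_one (N : Matrix ι ι ℂ) (μ t : ℂ) :
    exp (t • N) = Complex.exp (t * μ) • exp (t • (N - μ • 1)) := by
  let := Matrix.linftyOpNormedRing (n := ι) (α := ℂ)
  let := Matrix.linftyOpNormedAlgebra (n := ι) (R := ℂ) (α := ℂ)
  have hsplit : t • N = algebraMap ℂ (Matrix ι ι ℂ) (t * μ) + t • (N - μ • 1) := by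
    rw [Algebra.algebraMap_eq_smul_one, smul_sub, smul_smul]
    abel
  have hscalar : exp (algebraMap ℂ (Matrix ι ι ℂ) (t * μ)) = algebraMap ℂ _ (exp (t * μ)) :=
    (algebraMap_exp_comm _).symm
  rw [hsplit, exp_add_of_commute _ _ (Algebra.commute_algebraMap_left _ _), hscalar,
    Algebra.algebraMap_eq_smul_one, smul_mul_assoc, one_mul, Complex.exp_eq_exp_ℂ]

lemma exp_smul_mulVec_eq_sum_of_pow_mulVec_eq_zero (M : Matrix ι ι ℂ) {w : ι → ℂ} {k : ℕ}
    (hw : (M ^ k) *ᵥ w = 0) (t : ℂ) :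
    exp (t • M) *ᵥ w = ∑ j ∈ Finset.range k, (t ^ j / j !) • (M ^ j *ᵥ w) := by
  let := Matrix.linftyOpNormedRing (n := ι) (α := ℂ)
  let := Matrix.linftyOpNormedAlgebra (n := ι) (R := ℂ) (α := ℂ)
  have hseries := (exp_series_hasSum_exp' (𝕂 := ℂ) (t • M)).map (mulVec.addMonoidHomLeft w)
    (continuous_id.matrix_mulVec continuous_const)
  refine hseries.unique (hasSum_sum_of_ne_finset_zero fun j hj => ?_) |>.trans
    (Finset.sum_congr rfl fun j _ => ?_)
  · have hMj : M ^ j *ᵥ w = 0 := by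
      rw [← Nat.sub_add_cancel (not_lt.mp (Finset.mem_range.not.mp hj)), pow_add,
        ← mulVec_mulVec, hw, mulVec_zero]
    simp [mulVec.addMonoidHomLeft, smul_pow, smul_mulVec, hMj]
  · simp [mulVec.addMonoidHomLeft, smul_pow, smul_smul, smul_mulVec, div_eq_inv_mul]

lemma exp_ofReal_smul_mulVec_apply_mem_of_mem_maxGenEigenspace (N : Matrix ι ι ℂ) {μ : ℂ}
    (hμ : 0 < μ.re) {w : ι → ℂ} (hw : w ∈ Module.End.maxGenEigenspace (toLin' N) μ) (p : ι) :
    (fun t : ℝ => (exp ((t : ℂ) • N) *ᵥ w) p) ∈ decayingIntegrableAtBot := by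
  obtain ⟨k, hk⟩ := (Module.End.mem_maxGenEigenspace _ _ _).mp hw
  have hkill : ((N - μ • 1) ^ k) *ᵥ w = 0 := by
    simpa [← toLin'_apply, toLin'_pow, Module.End.one_eq_id] using hk
  have hsum : (fun t : ℝ => (exp ((t : ℂ) • N) *ᵥ w) p) = ∑ j ∈ Finset.range k,
      (((N - μ • 1) ^ j *ᵥ w) p / j !) • fun t : ℝ => (t : ℂ) ^ j * Complex.exp (t * μ) := by
    funext t
    rw [exp_smul_eq_cexp_smul_exp_smul_sub_smul_one N μ, smul_mulVec,
      exp_smul_mulVec_eq_sum_of_pow_mulVec_eq_zero _ hkill]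
    simp only [Pi.smul_apply, Finset.sum_apply, smul_eq_mul, Finset.mul_sum]
    refine Finset.sum_congr rfl fun j _ => ?_
    ring
  rw [hsum]
  exact Submodule.sum_mem _ fun j _ =>
    Submodule.smul_mem _ _ (pow_mul_cexp_mul_mem_decayingIntegrableAtBot hμ j)

lemma exp_ofReal_smul_mulVec_apply_mem (N : Matrix ι ι ℂ)
    (hN : ∀ μ ∈ spectrum ℂ N, 0 < μ.re) (v : ι → ℂ) (p : ι) :
    (fun t : ℝ => (exp ((t : ℂ) • N) *ᵥ v) p) ∈ decayingIntegrableAtBot := by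
  let L : (ι → ℂ) →ₗ[ℂ] ℝ → ℂ :=
    LinearMap.pi fun t : ℝ => (LinearMap.proj p).comp (exp ((t : ℂ) • N)).mulVecLin
  suffices ⊤ ≤ decayingIntegrableAtBot.comap L from this Submodule.mem_top
  rw [← Module.End.iSup_maxGenEigenspace_eq_top (toLin' N), iSup_le_iff]
  intro μ w hw
  by_cases hw0 : w = 0
  · simp [hw0]
  have hμ : μ ∈ spectrum ℂ N := by
    rw [← spectrum_toLin']
    exact ((Module.End.hasUnifEigenvalue_iff_hasUnifEigenvalue_one (by simp)).mp
      (Submodule.ne_bot_iff _ |>.mpr ⟨w, hw, hw0⟩)).mem_spectrum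
  exact exp_ofReal_smul_mulVec_apply_mem_of_mem_maxGenEigenspace N (hN μ hμ) hw p

lemma exp_ofReal_smul_apply_mem (N : Matrix ι ι ℂ)
    (hN : ∀ μ ∈ spectrum ℂ N, 0 < μ.re) (p q : ι) :
    (fun t : ℝ => exp ((t : ℂ) • N) p q) ∈ decayingIntegrableAtBot := by
  simpa [mulVec_single_one] using exp_ofReal_smul_mulVec_apply_mem N hN (Pi.single q 1) p

lemma hasDerivAt_mul_exp_ofReal_smul_apply (X N : Matrix ι ι ℂ) (p q : ι) (t : ℝ) :
    HasDerivAt (fun u : ℝ => (X * exp ((u : ℂ) • N)) p q) ((X * N * exp ((t : ℂ) • N)) p q) t := by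
  let := Matrix.linftyOpNormedRing (n := ι) (α := ℂ)
  let := Matrix.linftyOpNormedAlgebra (n := ι) (R := ℂ) (α := ℂ)
  let L : Matrix ι ι ℂ →L[ℝ] ℂ :=
    ((entryLinearMap ℂ ℂ p q ∘ₗ LinearMap.mulLeft ℂ X).toContinuousLinearMap).restrictScalars ℝ
  have hexp : HasDerivAt (fun u : ℝ => exp ((u : ℂ) • N)) (N * exp ((t : ℂ) • N)) t := by
    have := (hasDerivAt_exp_smul_const' N (t : ℂ)).scomp t (hasDerivAt_id t).ofReal_comp
    rw [Complex.ofReal_one, one_smul] at this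
    exact this
  have hL : L (N * exp ((t : ℂ) • N)) = (X * N * exp ((t : ℂ) • N)) p q := by
    rw [Matrix.mul_assoc]
    rfl
  exact (L.hasFDerivAt.comp_hasDerivAt t hexp).congr_deriv hL

lemma isUnit_det_of_forall_mem_spectrum_re_pos {N : Matrix ι ι ℂ}
    (hN : ∀ μ ∈ spectrum ℂ N, 0 < μ.re) : IsUnit N.det := by
  rw [← isUnit_iff_isUnit_det, ← not_not (a := IsUnit N), ← spectrum.zero_mem_iff ℂ]
  exact fun h0 => (hN 0 h0).false

lemma of_integral_Iic_exp_ofReal_smul (N : Matrix ι ι ℂ) (hN : ∀ μ ∈ spectrum ℂ N, 0 < μ.re) :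
    Matrix.of (fun p q => ∫ t in Iic (0 : ℝ), exp ((t : ℂ) • N) p q) = N⁻¹ := by
  ext p q
  rw [of_apply]
  have hderiv (t : ℝ) :
      HasDerivAt (fun u : ℝ => (N⁻¹ * exp ((u : ℂ) • N)) p q) (exp ((t : ℂ) • N) p q) t := by
    simpa [nonsing_inv_mul N (isUnit_det_of_forall_mem_spectrum_re_pos hN)] using
      hasDerivAt_mul_exp_ofReal_smul_apply N⁻¹ N p q t
  have hdecay : Tendsto (fun t : ℝ => (N⁻¹ * exp ((t : ℂ) • N)) p q) atBot (𝓝 0) := by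
    simp only [mul_apply]
    simpa using tendsto_finsetSum Finset.univ fun r _ =>
      (exp_ofReal_smul_apply_mem N hN r q).2.const_mul (N⁻¹ p r)
  rw [integral_Iic_of_hasDerivAt_of_tendsto' (fun t _ => hderiv t)
    (exp_ofReal_smul_apply_mem N hN p q).1 hdecay]
  simp

end Exp

lemma integral_mul_mul_apply {α l ι m : Type*} [MeasurableSpace α] {μ : Measure α}
    [Fintype ι] (X : Matrix l ι ℂ) (Y : Matrix ι m ℂ) {E : α → Matrix ι ι ℂ}
    (hE : ∀ p q, Integrable (fun x => E x p q) μ) (i : l) (j : m) :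
    ∫ x, (X * E x * Y) i j ∂μ = (X * Matrix.of (fun p q => ∫ x, E x p q ∂μ) * Y) i j := by
  simp only [mul_apply, Finset.sum_mul]
  rw [integral_finsetSum _ fun q _ => integrable_finsetSum _ fun p _ =>
    ((hE p q).const_mul _).mul_const _]
  refine Finset.sum_congr rfl fun q _ => ?_
  rw [integral_finsetSum _ fun p _ => ((hE p q).const_mul _).mul_const _]
  refine Finset.sum_congr rfl fun p _ => ?_
  rw [integral_mul_const, integral_const_mul, of_apply]

lemma of_integral_Iic_cexp_mul_exp_neg_smul_apply {l ι m : Type*} [Fintype ι] [DecidableEq ι]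
    (X : Matrix l ι ℂ) (Y : Matrix ι m ℂ) (B : Matrix ι ι ℂ) (c : ℂ)
    (hN : ∀ μ ∈ spectrum ℂ ((-c) • 1 - B), 0 < μ.re) :
    (Matrix.of fun i j => ∫ t in Iic (0 : ℝ),
      Complex.exp (-(c * t)) * (X * exp ((-(t : ℂ)) • B) * Y) i j) = X * ((-c) • 1 - B)⁻¹ * Y := by
  have hintegrand (t : ℝ) (i : l) (j : m) :
      Complex.exp (-(c * t)) * (X * exp ((-(t : ℂ)) • B) * Y) i j =
        (X * exp ((t : ℂ) • ((-c) • 1 - B)) * Y) i j := by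
    rw [exp_smul_eq_cexp_smul_exp_smul_sub_smul_one ((-c) • 1 - B) (-c) t, Matrix.mul_smul,
      Matrix.smul_mul, Matrix.smul_apply, smul_eq_mul, show (t : ℂ) * -c = -(c * t) by ring,
      show (t : ℂ) • ((-c) • 1 - B - (-c) • 1) = (-(t : ℂ)) • B by module]
  ext i j
  simp_rw [of_apply, hintegrand]
  rw [integral_mul_mul_apply _ _ (fun p q => (exp_ofReal_smul_apply_mem _ hN p q).1),
    of_integral_Iic_exp_ofReal_smul _ hN]

lemma inv_sub_mul_inv_mul_mul {m n : Type*} [Fintype m] [DecidableEq m] [Fintype n]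
    [DecidableEq n] {S S' : Matrix m m ℂ} {C : Matrix m n ℂ} {C' : Matrix n m ℂ}
    {R N : Matrix n n ℂ} (hR : IsUnit R.det) (hN : IsUnit N.det) (hC : C' * C = R + N)
    (hS : S * S' = 1) :
    (S - C * R⁻¹ * (C' * S))⁻¹ = S' - S' * C * N⁻¹ * C' := by
  refine inv_eq_right_inv ?_
  have hcross : C * R⁻¹ * (C' * S) * (S' * C * N⁻¹ * C') = C * N⁻¹ * C' + C * R⁻¹ * C' := by
    calc C * R⁻¹ * (C' * S) * (S' * C * N⁻¹ * C')
        = C * R⁻¹ * (C' * C) * N⁻¹ * C' := by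
          simp only [Matrix.mul_assoc, ← Matrix.mul_assoc S S', hS, Matrix.one_mul]
      _ = C * N⁻¹ * C' + C * R⁻¹ * C' := by
          rw [hC, Matrix.mul_add, Matrix.add_mul, Matrix.add_mul, Matrix.mul_assoc C R⁻¹ R,
            nonsing_inv_mul R hR, Matrix.mul_one, Matrix.mul_assoc (C * R⁻¹) N N⁻¹,
            mul_nonsing_inv N hN, Matrix.mul_one, add_comm]
  rw [Matrix.sub_mul, Matrix.mul_sub, Matrix.mul_sub, hcross]
  simp only [Matrix.mul_assoc, ← Matrix.mul_assoc S S', hS, Matrix.one_mul, Matrix.mul_one]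
  abel

end Matrix

lemma Jmat_mul_self (n : ℕ) : Jmat n * Jmat n = 1 := by
  simp [Jmat, fromBlocks_multiply, ← fromBlocks_one]

lemma conjTranspose_Jmat (n : ℕ) : (Jmat n)ᴴ = Jmat n := by
  simp [Jmat, fromBlocks_conjTranspose]

lemma Jmat_mem_unitary (n : ℕ) :
    Jmat n ∈ unitary (Matrix (Fin n ⊕ Fin n) (Fin n ⊕ Fin n) ℂ) :=
  Unitary.mem_iff.mpr ⟨by rw [star_eq_conjTranspose, conjTranspose_Jmat, Jmat_mul_self],
    by rw [star_eq_conjTranspose, conjTranspose_Jmat, Jmat_mul_self]⟩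

lemma spectrum_flat {n : ℕ} (A : Matrix (Fin n ⊕ Fin n) (Fin n ⊕ Fin n) ℂ) :
    spectrum ℂ (flat A) = star (spectrum ℂ A) := by
  let J : unitary (Matrix (Fin n ⊕ Fin n) (Fin n ⊕ Fin n) ℂ) := ⟨Jmat n, Jmat_mem_unitary n⟩
  have hconj : flat A = J * star A * star (J : Matrix (Fin n ⊕ Fin n) (Fin n ⊕ Fin n) ℂ) := by
    simp [J, flat, star_eq_conjTranspose, conjTranspose_Jmat]
  rw [hconj, Unitary.spectrum_star_right_conjugate, spectrum.map_star]

lemma re_pos_of_mem_spectrum_smul_one_sub_flat {n : ℕ}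
    {A : Matrix (Fin n ⊕ Fin n) (Fin n ⊕ Fin n) ℂ} (hA : ∀ μ ∈ spectrum ℂ A, μ.re < 0) {c : ℂ}
    (hc : 0 ≤ c.re) : ∀ μ ∈ spectrum ℂ (c • 1 - flat A), 0 < μ.re := by
  intro μ hμ
  rw [← Algebra.algebraMap_eq_smul_one, ← spectrum.singleton_sub_eq, spectrum_flat] at hμ
  obtain ⟨_, rfl, ν, hν, rfl⟩ := hμ
  have := hA (star ν) hν
  simp only [Complex.star_def, Complex.conj_re] at this
  simp only [Complex.sub_re]
  linarith

/-- The (anticausal) stable inverse g_{G⁻¹}(t) = S^♭δ(t) - S^♭Ce^{-A^♭t}C^♭·1_{t≤0} has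
two-sided Laplace transform, on the imaginary axis, equal to Ξ_G(iω)⁻¹. -/
theorem stable_inverse_impulse_response {n m : ℕ}
    (A : Matrix (Fin n ⊕ Fin n) (Fin n ⊕ Fin n) ℂ)
    (C : Matrix (Fin m ⊕ Fin m) (Fin n ⊕ Fin n) ℂ)
    (S : Matrix (Fin m ⊕ Fin m) (Fin m ⊕ Fin m) ℂ)
    (hPR : A + flat A + flat C * C = 0)
    (hS : flat S * S = 1 ∧ S * flat S = 1)
    (hHurwitz : ∀ μ ∈ spectrum ℂ A, μ.re < 0)
    (Ξ : ℝ → Matrix (Fin m ⊕ Fin m) (Fin m ⊕ Fin m) ℂ)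
    (hΞ : ∀ ω : ℝ, Ξ ω = S - C * ((Complex.I * (ω : ℂ)) • (1 : Matrix (Fin n ⊕ Fin n) (Fin n ⊕ Fin n) ℂ) - A)⁻¹ * (flat C * S)) :
    ∀ ω : ℝ,
      flat S - (Matrix.of fun i j =>
        ∫ t in Set.Iic (0 : ℝ), Complex.exp (-(Complex.I * (ω : ℂ) * (t : ℂ))) *
          ((flat S * C * NormedSpace.exp ((-(t : ℂ)) • flat A) * flat C) i j))
      = (Ξ ω)⁻¹ := by
  intro ω
  have hN := re_pos_of_mem_spectrum_smul_one_sub_flat hHurwitz (c := -(Complex.I * ω)) (by simp)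
  have hR : IsUnit ((Complex.I * ω) • 1 - A).det := by
    rw [← isUnit_iff_isUnit_det, ← Algebra.algebraMap_eq_smul_one, ← spectrum.notMem_iff]
    exact fun h => (hHurwitz _ h).ne (by simp)
  have hCC : flat C * C = ((Complex.I * ω) • 1 - A) + ((-(Complex.I * ω)) • 1 - flat A) := by
    rw [eq_neg_of_add_eq_zero_right hPR]
    module
  rw [of_integral_Iic_cexp_mul_exp_neg_smul_apply _ _ _ _ hN, hΞ ω]
  exact (inv_sub_mul_inv_mul_mul hR (isUnit_det_of_forall_mem_spectrum_re_pos hN) hCC hS.2).symm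
end

section
/- With ν, g_{G^-} as in the cavity example (ω₀ = 0 case), the output pulse shape ξ_out preserves normalization: ∫_{-∞}^∞ |ξ_out(t)|² dt = ∫_{-∞}^∞ |ν(t)|² dt = 1. -/
/-!
Both pulses vanish for `t < 0` and for `t ≥ 0` are real combinations `A e^{-γt} + B e^{-κt/2}`,
whose energy is `A²/(2γ) + 2AB/(γ + κ/2) + B²/κ`. For `ν`, `(A, B) = (s, 0)` with `s = √(2γ)`;
for `ξ_out`, `(A, B) = (s - C, C)` with `C = κs/(κ/2 - γ)`, and clearing denominators shows that
both energies equal `s²/(2γ) = 1`.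
-/

open MeasureTheory Complex Set

lemma integral_exp_neg_mul_Ioi_zero {a : ℝ} (ha : 0 < a) :
    ∫ t in Ioi (0 : ℝ), Real.exp (-a * t) = a⁻¹ := by
  rw [integral_exp_mul_Ioi (neg_lt_zero.2 ha)]
  simp

lemma integral_sq_add_exp_Ioi_zero {a b : ℝ} (ha : 0 < a) (hb : 0 < b) (A B : ℝ) :
    ∫ t in Ioi (0 : ℝ), (A * Real.exp (-a * t) + B * Real.exp (-b * t)) ^ 2
      = A ^ 2 / (2 * a) + 2 * A * B / (a + b) + B ^ 2 / (2 * b) := by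
  have hint : ∀ {c : ℝ}, 0 < c → ∀ C : ℝ,
      IntegrableOn (fun t => C * Real.exp (-c * t)) (Ioi 0) := fun hc C =>
    (integrableOn_exp_mul_Ioi (neg_lt_zero.2 hc) 0).const_mul C
  have hexpand : (fun t => (A * Real.exp (-a * t) + B * Real.exp (-b * t)) ^ 2)
      = fun t => A ^ 2 * Real.exp (-(2 * a) * t) + 2 * A * B * Real.exp (-(a + b) * t)
          + B ^ 2 * Real.exp (-(2 * b) * t) := by
    funext t
    rw [show -(2 * a) * t = -a * t + -a * t by ring, show -(a + b) * t = -a * t + -b * t by ring,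
      show -(2 * b) * t = -b * t + -b * t by ring, Real.exp_add, Real.exp_add, Real.exp_add]
    ring
  have h2a : 0 < 2 * a := by positivity
  have hab : 0 < a + b := by positivity
  have h2b : 0 < 2 * b := by positivity
  have h12 : IntegrableOn
      (fun t => A ^ 2 * Real.exp (-(2 * a) * t) + 2 * A * B * Real.exp (-(a + b) * t)) (Ioi 0) :=
    (hint h2a _).add (hint hab _)
  rw [hexpand, integral_add h12 (hint h2b _), integral_add (hint h2a _) (hint hab _),
    integral_const_mul, integral_const_mul, integral_const_mul, integral_exp_neg_mul_Ioi_zero h2a, integral_exp_neg_mul_Ioi_zero hab,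
    integral_exp_neg_mul_Ioi_zero h2b]
  ring

lemma integral_sq_exp_Ioi_zero {a : ℝ} (ha : 0 < a) (A : ℝ) :
    ∫ t in Ioi (0 : ℝ), (A * Real.exp (-a * t)) ^ 2 = A ^ 2 / (2 * a) := by
  simpa using integral_sq_add_exp_Ioi_zero ha ha A 0

lemma integral_norm_sq_eq_of_causal {f : ℝ → ℂ} {g : ℝ → ℝ}
    (hf : ∀ t, f t = if t < 0 then 0 else (g t : ℂ)) :
    ∫ t, ‖f t‖ ^ 2 = ∫ t in Ioi 0, g t ^ 2 := by
  have hind : (fun t => ‖f t‖ ^ 2) = (Ici 0).indicator fun t => g t ^ 2 := by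
    funext t
    by_cases ht : t < 0
    · simp [hf, ht]
    · simp [hf, ht, not_lt.1 ht]
  rw [hind, integral_indicator measurableSet_Ici, integral_Ici_eq_integral_Ioi]

lemma cavity_energy_balance {γ κ s C : ℝ} (hγ : 0 < γ) (hκ : 0 < κ) (hne : κ / 2 - γ ≠ 0)
    (hC : C = κ * s / (κ / 2 - γ)) :
    (s - C) ^ 2 / (2 * γ) + 2 * (s - C) * C / (γ + κ / 2) + C ^ 2 / (2 * (κ / 2))
      = s ^ 2 / (2 * γ) := by
  have hsum : γ + κ / 2 ≠ 0 := by positivity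
  have hdiff : κ - 2 * γ ≠ 0 := fun h => hne (by linarith)
  subst hC
  field_simp
  ring

/-- The optical cavity (an all-pass system) preserves the normalization of the single-photon
pulse shape: ∫|ξ_out|² = ∫|ν|² = 1. -/
theorem cavity_preserves_normalization (γ κ : ℝ) (hγ : 0 < γ) (hκ : 0 < κ)
    (hne : γ ≠ κ / 2)
    (ν ξout : ℝ → ℂ)
    (hν : ∀ t : ℝ, ν t = if t < 0 then 0 else (Real.sqrt (2 * γ) : ℂ) * Complex.exp (-(γ : ℂ) * t))
    (hξ : ∀ t : ℝ, ξout t = if t < 0 then 0 else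
      (Real.sqrt (2 * γ) : ℂ) * Complex.exp (-(γ : ℂ) * t)
      - ((κ : ℂ) * (Real.sqrt (2 * γ) : ℂ) / ((κ / 2 : ℂ) - γ)) *
        (Complex.exp (-(γ : ℂ) * t) - Complex.exp (-((κ / 2 : ℂ)) * t))) :
    ((∫ t : ℝ, ‖ξout t‖ ^ 2) = ∫ t : ℝ, ‖ν t‖ ^ 2) ∧ (∫ t : ℝ, ‖ν t‖ ^ 2) = 1 := by
  set s := Real.sqrt (2 * γ)
  set C := κ * s / (κ / 2 - γ)
  have hs : s ^ 2 = 2 * γ := Real.sq_sqrt (by positivity)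
  have hν' : ∀ t, ν t = if t < 0 then 0 else ((s * Real.exp (-γ * t) : ℝ) : ℂ) := by
    intro t
    rw [hν]
    push_cast
    rw [neg_mul]
  have hξ' : ∀ t, ξout t = if t < 0 then 0 else
      (((s - C) * Real.exp (-γ * t) + C * Real.exp (-(κ / 2) * t) : ℝ) : ℂ) := by
    intro t
    rw [hξ]
    congr 1
    push_cast [C]
    ring
  have hνE : ∫ t, ‖ν t‖ ^ 2 = s ^ 2 / (2 * γ) := by
    rw [integral_norm_sq_eq_of_causal hν', integral_sq_exp_Ioi_zero hγ]
  have hξE : ∫ t, ‖ξout t‖ ^ 2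
      = (s - C) ^ 2 / (2 * γ) + 2 * (s - C) * C / (γ + κ / 2) + C ^ 2 / (2 * (κ / 2)) := by
    rw [integral_norm_sq_eq_of_causal hξ', integral_sq_add_exp_Ioi_zero hγ (half_pos hκ)]
  refine ⟨?_, ?_⟩
  · rw [hξE, hνE]
    exact cavity_energy_balance hγ hκ (sub_ne_zero.2 hne.symm) rfl
  · rw [hνE, hs]
    exact div_self (by positivity)
end

section
/- Let A ∈ ℂ^{n×n} be Hurwitz, C ∈ ℂ^{m×n}, and suppose (C,A) is observable. Let X > 0 be the (unique, positive definite) solution of the observability Lyapunov equation A^†X + XA + C^†C = 0, and set B = -X^{-1}C^†. Then X^{-1}A^† + AX^{-1} + BB^† = 0 and the transfer function Φ(s) = I + C(sI - A)^{-1}B satisfies Φ(-s̄)^†Φ(s) = I wherever defined; in particular Φ(iω) is unitary for all real ω (all-pass realization). -/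
open Matrix
open scoped ComplexOrder

/-- All-pass realization lemma for pulse shaping (Theorem 5 of the paper): with A Hurwitz,
(C,A) observable, X > 0 solving A†X + XA + C†C = 0 and B = -X⁻¹C†, one has
X⁻¹A† + AX⁻¹ + BB† = 0 and Φ(s) = I + C(sI-A)⁻¹B satisfies Φ(-s̄)†Φ(s) = I wherever
defined; in particular Φ(iω) is unitary for all real ω. -/
theorem allpass_realization {n m : ℕ}
    (A : Matrix (Fin n) (Fin n) ℂ) (C : Matrix (Fin m) (Fin n) ℂ)
    (hHurwitz : ∀ μ ∈ spectrum ℂ A, μ.re < 0)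
    (hObs : ∀ v : Fin n → ℂ, (∀ k : ℕ, C.mulVec ((A ^ k).mulVec v) = 0) → v = 0)
    (X : Matrix (Fin n) (Fin n) ℂ) (hX : X.PosDef)
    (hLyap : Aᴴ * X + X * A + Cᴴ * C = 0)
    (B : Matrix (Fin n) (Fin m) ℂ) (hB : B = -(X⁻¹ * Cᴴ))
    (Φ : ℂ → Matrix (Fin m) (Fin m) ℂ)
    (hΦ : ∀ s : ℂ, Φ s = 1 + C * (s • (1 : Matrix (Fin n) (Fin n) ℂ) - A)⁻¹ * B) :
    X⁻¹ * Aᴴ + A * X⁻¹ + B * Bᴴ = 0 ∧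
    (∀ s : ℂ,
      IsUnit (s • (1 : Matrix (Fin n) (Fin n) ℂ) - A).det →
      IsUnit ((-(starRingEnd ℂ s)) • (1 : Matrix (Fin n) (Fin n) ℂ) - A).det →
      (Φ (-(starRingEnd ℂ s)))ᴴ * Φ s = 1) ∧
    (∀ ω : ℝ, (Φ (Complex.I * ω))ᴴ * Φ (Complex.I * ω) = 1 ∧
      Φ (Complex.I * ω) * (Φ (Complex.I * ω))ᴴ = 1) := by
  have hXd : IsUnit X.det := (isUnit_iff_isUnit_det X).mp hX.isUnit
  have hXinv : X * X⁻¹ = 1 := mul_nonsing_inv X hXd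
  have hXinv' : X⁻¹ * X = 1 := nonsing_inv_mul X hXd
  have hXherm : Xᴴ = X := hX.isHermitian
  have hXinvherm : (X⁻¹)ᴴ = X⁻¹ := by
    rw [conjTranspose_nonsing_inv, hXherm]
  have hBH : Bᴴ = -(C * X⁻¹) := by
    rw [hB, conjTranspose_neg, conjTranspose_mul, conjTranspose_conjTranspose, hXinvherm]
  have hCC : Cᴴ * C = -(Aᴴ * X) - X * A := by
    have h := eq_neg_of_add_eq_zero_right hLyap
    rw [h, neg_add, ← sub_eq_add_neg]
  have hBX : Bᴴ * X = -C := by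
    rw [hBH, Matrix.neg_mul, Matrix.mul_assoc, hXinv', Matrix.mul_one]
  have hXB : X * B = -Cᴴ := by
    rw [hB, Matrix.mul_neg, ← Matrix.mul_assoc, hXinv, Matrix.one_mul]
  -- Part 1
  have part1 : X⁻¹ * Aᴴ + A * X⁻¹ + B * Bᴴ = 0 := by
    have hBB : B * Bᴴ = -(X⁻¹ * Aᴴ) - A * X⁻¹ := by
      rw [hBH, hB, Matrix.neg_mul, Matrix.mul_neg, neg_neg, Matrix.mul_assoc, ← Matrix.mul_assoc Cᴴ C X⁻¹, hCC,
        Matrix.sub_mul, Matrix.neg_mul, Matrix.mul_assoc Aᴴ X X⁻¹, hXinv, Matrix.mul_one,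
        Matrix.mul_sub, Matrix.mul_neg, Matrix.mul_assoc X A X⁻¹,
        ← Matrix.mul_assoc X⁻¹ X (A * X⁻¹), hXinv', Matrix.one_mul]
    rw [hBB]; abel
  -- Part 2
  have part2 : ∀ s : ℂ,
      IsUnit (s • (1 : Matrix (Fin n) (Fin n) ℂ) - A).det →
      IsUnit ((-(starRingEnd ℂ s)) • (1 : Matrix (Fin n) (Fin n) ℂ) - A).det →
      (Φ (-(starRingEnd ℂ s)))ᴴ * Φ s = 1 := by
    intro s hs ht
    set M : Matrix (Fin n) (Fin n) ℂ := s • 1 - A with hM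
    set M' : Matrix (Fin n) (Fin n) ℂ := (-(starRingEnd ℂ s)) • 1 - A with hM'
    set N : Matrix (Fin n) (Fin n) ℂ := M'ᴴ with hNdef
    have hNdet : IsUnit N.det := by
      rw [hNdef, det_conjTranspose]
      exact (isUnit_star).mpr ht
    have hN : N = (-s) • 1 - Aᴴ := by
      rw [hNdef, hM', conjTranspose_sub, conjTranspose_smul, conjTranspose_one]
      simp
    have hNX : N * X + X * M = Cᴴ * C := by
      rw [hN, hM, hCC, Matrix.sub_mul, Matrix.mul_sub, Matrix.smul_mul, Matrix.mul_smul,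
        Matrix.one_mul, Matrix.mul_one, neg_smul]
      abel
    have hPhiH : (Φ (-(starRingEnd ℂ s)))ᴴ = 1 + Bᴴ * (N⁻¹ * Cᴴ) := by
      rw [hΦ, conjTranspose_add, conjTranspose_one, conjTranspose_mul, conjTranspose_mul,
        conjTranspose_nonsing_inv, ← hM', ← hNdef]
    have h1 : Cᴴ * (C * (M⁻¹ * B)) = N * (X * (M⁻¹ * B)) + X * B := by
      rw [← Matrix.mul_assoc Cᴴ C (M⁻¹ * B), ← hNX, Matrix.add_mul, Matrix.mul_assoc N X _,
        Matrix.mul_assoc X M _, mul_nonsing_inv_cancel_left M B hs]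
    have key : Bᴴ * (N⁻¹ * (Cᴴ * (C * (M⁻¹ * B)))) =
        -(C * (M⁻¹ * B)) - Bᴴ * (N⁻¹ * Cᴴ) := by
      rw [h1, Matrix.mul_add, nonsing_inv_mul_cancel_left N _ hNdet, hXB, Matrix.mul_add,
        ← Matrix.mul_assoc Bᴴ X _, hBX, Matrix.neg_mul]
      simp only [Matrix.mul_neg]
      abel
    rw [hPhiH, hΦ s]
    rw [Matrix.add_mul, Matrix.one_mul, Matrix.mul_add, Matrix.mul_one]
    simp only [Matrix.mul_assoc]
    rw [key]
    abel
  refine ⟨part1, part2, ?_⟩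
  intro ω
  set s : ℂ := Complex.I * ω with hsdef
  have hconj : -(starRingEnd ℂ s) = s := by
    simp [hsdef, Complex.conj_I, Complex.conj_ofReal]
  have hdet : IsUnit (s • (1 : Matrix (Fin n) (Fin n) ℂ) - A).det := by
    rw [← isUnit_iff_isUnit_det]
    have hns : s ∉ spectrum ℂ A := by
      intro hmem
      have := hHurwitz s hmem
      simp [hsdef, Complex.mul_re] at this
    rw [spectrum.mem_iff, not_not, Algebra.algebraMap_eq_smul_one] at hns
    exact hns
  have h2 := part2 s hdet (by rw [hconj]; exact hdet)
  rw [hconj] at h2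
  exact ⟨h2, mul_eq_one_comm.mp h2⟩
end
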